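/- arXiv:2102.01718 — 2 statements merged into one kernel-verified Lean document; each statement's English description precedes it below -/
import Mathlib

section
/- Let D = D_b × [0,∞) ⊂ ℝ^d with D_b ⊂ ℝ^{d-1} bounded measurable of positive measure |D_b|, and let B = B((x̂, y'), R) be a ball of radius R with x̂ ∈ D_b at distance > R·(√3/2 margin) from ∂D_b and y' ≥ R. Define Q(γ, y') = ∫_{D∖B} γ e^{-γ y} dx dy. Then for all γ > 0 and y' ≥ R: (1/8)(1 − e^{-1/2}) |D_b| ≤ Q(γ, y') ≤ |D_b|. -/
/-!
Both lower bounds come from rectangles inside `D ∖ B`, on which the density factorises. The slab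
`D_b × (y' + R, ∞)` above the ball has mass `|D_b| e^{-γ (y' + R)}`. Below height `y' - R/2`, the
ball lies inside the vertical cylinder of radius `(√3/2) R` around `x̂`, whose section has
measure at most `(√3/2) |D_b|` by scaling of Lebesgue measure; so the complement of the cylinder
in `D_b × (0, y' - R/2)` has mass at least `(1 - √3/2) |D_b| (1 - e^{-γ (y' - R/2)})`. The
first bound wins when `γ (y' - R/2) < 1/2`, the second otherwise.
-/

open MeasureTheory Real Set

/-- The region `D ∖ B((x̂,y'),R)` where `D = D_b × (0,∞)`: points `(x,y)` with
`x ∈ D_b`, `y > 0`, lying outside the `d`-dimensional ball of radius `R`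
centered at `(x̂, y')`. -/
def gasRegion {E : Type*} [NormedAddCommGroup E]
    (Db : Set E) (xh : E) (R y' : ℝ) : Set (E × ℝ) :=
  {p | p.1 ∈ Db ∧ 0 < p.2 ∧ R ^ 2 < ‖p.1 - xh‖ ^ 2 + (p.2 - y') ^ 2}

/-- The mass `Q(γ,y') = ∫_{D∖B} γ e^{-γ y} dx dy`. -/
noncomputable def gasMass (d : ℕ) (Db : Set (EuclideanSpace ℝ (Fin (d - 1))))
    (xh : EuclideanSpace ℝ (Fin (d - 1))) (R y' γ : ℝ) : ℝ :=
  ∫ p in gasRegion Db xh R y', γ * exp (-γ * p.2)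

section ExponentialDensity

variable {γ : ℝ}

lemma integrableOn_mul_exp_neg_mul_Ioi (hγ : 0 < γ) (a : ℝ) :
    IntegrableOn (fun y : ℝ => γ * exp (-γ * y)) (Ioi a) :=
  (exp_neg_integrableOn_Ioi a hγ).const_mul γ

lemma integral_Ioi_mul_exp_neg_mul (hγ : 0 < γ) (a : ℝ) :
    ∫ y in Ioi a, γ * exp (-γ * y) = exp (-γ * a) := by
  rw [integral_const_mul, integral_exp_mul_Ioi (neg_lt_zero.2 hγ)]
  field_simp

lemma integral_Ioo_mul_exp_neg_mul (hγ : 0 < γ) {a b : ℝ} (hab : a ≤ b) :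
    ∫ y in Ioo a b, γ * exp (-γ * y) = exp (-γ * a) - exp (-γ * b) := by
  rw [← integral_Ioc_eq_integral_Ioo, ← intervalIntegral.integral_of_le hab,
    ← intervalIntegral.integral_Ioi_sub_Ioi (integrableOn_mul_exp_neg_mul_Ioi hγ a) hab,
    integral_Ioi_mul_exp_neg_mul hγ, integral_Ioi_mul_exp_neg_mul hγ]

end ExponentialDensity

section Product

variable {α β : Type*} [MeasurableSpace α] [MeasurableSpace β] {μ : Measure α} {ν : Measure β}
  [SFinite μ] [SFinite ν]

lemma setIntegral_prod_comp_snd (g : β → ℝ) (s : Set α) (t : Set β) :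
    ∫ z in s ×ˢ t, g z.2 ∂μ.prod ν = μ.real s * ∫ y in t, g y ∂ν := by
  simpa using setIntegral_prod_mul (μ := μ) (ν := ν) (fun _ => (1 : ℝ)) g s t

lemma IntegrableOn.comp_snd_prod {g : β → ℝ} {s : Set α} {t : Set β}
    (hs : μ s ≠ ⊤) (hg : IntegrableOn g t ν) :
    IntegrableOn (fun z : α × β => g z.2) (s ×ˢ t) (μ.prod ν) := by
  rw [IntegrableOn, ← Measure.prod_restrict]
  simpa using (integrableOn_const (C := (1 : ℝ)) hs).mul_prod hg

end Product

section Haar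

variable {E : Type*} [NormedAddCommGroup E] [NormedSpace ℝ E] [FiniteDimensional ℝ E]
  [Nontrivial E] [MeasurableSpace E] [BorelSpace E] (μ : Measure E) [μ.IsAddHaarMeasure]

lemma addHaar_ball_mul_le {c : ℝ} (hc₀ : 0 ≤ c) (hc₁ : c ≤ 1) (x : E) (R : ℝ) :
    μ (Metric.ball x (c * R)) ≤ ENNReal.ofReal c * μ (Metric.ball x R) := by
  rw [Measure.addHaar_ball_mul μ x hc₀, ← Measure.addHaar_ball_center μ x]
  gcongr
  exact pow_le_of_le_one hc₀ hc₁ Module.finrank_pos.ne'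

lemma measureReal_diff_ball_mul_ge {c : ℝ} (hc₀ : 0 ≤ c) (hc₁ : c ≤ 1) {s : Set E} {x : E}
    {R : ℝ} (hs : μ s ≠ ⊤) (hball : Metric.ball x R ⊆ s) :
    (1 - c) * μ.real s ≤ μ.real (s \ Metric.ball x (c * R)) := by
  have hsmall : μ.real (Metric.ball x (c * R)) ≤ c * μ.real s := by
    have hle : μ (Metric.ball x (c * R)) ≤ ENNReal.ofReal c * μ s :=
      (addHaar_ball_mul_le μ hc₀ hc₁ x R).trans (by gcongr)
    have := ENNReal.toReal_mono (by finiteness) hle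
    rwa [ENNReal.toReal_mul, ENNReal.toReal_ofReal hc₀] at this
  linarith [le_measureReal_sdiff (μ := μ) (s₁ := s) (s₂ := Metric.ball x (c * R))]

end Haar

section Region

variable {E : Type*} [NormedAddCommGroup E] {Db : Set E} {xh : E} {R y' : ℝ}

lemma gasRegion_subset_prod_Ioi : gasRegion Db xh R y' ⊆ Db ×ˢ Ioi 0 :=
  fun _ hp => ⟨hp.1, hp.2.1⟩

lemma prod_Ioi_subset_gasRegion (hR : 0 ≤ R) (hy' : 0 ≤ y' + R) :
    Db ×ˢ Ioi (y' + R) ⊆ gasRegion Db xh R y' := by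
  rintro ⟨x, y⟩ ⟨hx, hy : y' + R < y⟩
  exact ⟨hx, by linarith, by nlinarith [sq_nonneg ‖x - xh‖]⟩

lemma diff_ball_prod_Ioo_subset_gasRegion (hR : 0 ≤ R) :
    (Db \ Metric.ball xh (√3 / 2 * R)) ×ˢ Ioo 0 (y' - R / 2) ⊆ gasRegion Db xh R y' := by
  rintro ⟨x, y⟩ ⟨⟨hx, hxB⟩, hy₀ : 0 < y, hy : y < y' - R / 2⟩
  have hdist : √3 / 2 * R ≤ ‖x - xh‖ := by simpa [dist_eq_norm] using hxB
  have h3 : √3 ^ 2 = 3 := sq_sqrt (by norm_num)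
  refine ⟨hx, hy₀, ?_⟩
  nlinarith [mul_self_le_mul_self (by positivity) hdist]

end Region

lemma one_div_eight_le_one_sub_sqrt_three_div_two : 1 / 8 ≤ 1 - √3 / 2 := by
  have : √3 ≤ 7 / 4 := (sqrt_le_left (by norm_num)).2 (by norm_num)
  linarith

section Mass

variable {d : ℕ} {Db : Set (EuclideanSpace ℝ (Fin (d - 1)))} {xh : EuclideanSpace ℝ (Fin (d - 1))}
  {R y' γ : ℝ}

lemma integrableOn_prod_Ioi (hDb : volume Db ≠ ⊤) (hγ : 0 < γ) (a : ℝ) :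
    IntegrableOn (fun p : EuclideanSpace ℝ (Fin (d - 1)) × ℝ => γ * exp (-γ * p.2))
      (Db ×ˢ Ioi a) := by
  rw [Measure.volume_eq_prod]
  exact IntegrableOn.comp_snd_prod hDb (integrableOn_mul_exp_neg_mul_Ioi hγ a)

lemma le_gasMass_of_prod_subset (hDb : volume Db ≠ ⊤) (hγ : 0 < γ)
    {s : Set (EuclideanSpace ℝ (Fin (d - 1)))} {t : Set ℝ}
    (hst : s ×ˢ t ⊆ gasRegion Db xh R y') :
    volume.real s * ∫ y in t, γ * exp (-γ * y) ≤ gasMass d Db xh R y' γ := by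
  rw [← setIntegral_prod_comp_snd (g := fun y => γ * exp (-γ * y)), ← Measure.volume_eq_prod]
  exact setIntegral_mono_set
    ((integrableOn_prod_Ioi hDb hγ 0).mono_set gasRegion_subset_prod_Ioi)
    (.of_forall fun p => by positivity) hst.eventuallyLE

lemma gasMass_le (hDb : volume Db ≠ ⊤) (hγ : 0 < γ) :
    gasMass d Db xh R y' γ ≤ volume.real Db := by
  calc gasMass d Db xh R y' γ ≤ ∫ p in Db ×ˢ Ioi 0, γ * exp (-γ * p.2) :=
        setIntegral_mono_set (integrableOn_prod_Ioi hDb hγ 0)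
          (.of_forall fun p => by positivity) gasRegion_subset_prod_Ioi.eventuallyLE
    _ = volume.real Db := by
        rw [Measure.volume_eq_prod, setIntegral_prod_comp_snd (g := fun y => γ * exp (-γ * y)),
          integral_Ioi_mul_exp_neg_mul hγ]
        simp

lemma measureReal_mul_exp_le_gasMass (hDb : volume Db ≠ ⊤) (hγ : 0 < γ) (hR : 0 ≤ R)
    (hy' : 0 ≤ y' + R) :
    volume.real Db * exp (-γ * (y' + R)) ≤ gasMass d Db xh R y' γ := by
  simpa only [integral_Ioi_mul_exp_neg_mul hγ] using
    le_gasMass_of_prod_subset hDb hγ (prod_Ioi_subset_gasRegion hR hy')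

lemma measureReal_mul_one_sub_exp_le_gasMass (hd : 2 ≤ d) (hDb : volume Db ≠ ⊤)
    (hball : Metric.ball xh R ⊆ Db) (hγ : 0 < γ) (hR : 0 ≤ R) (hy' : R / 2 ≤ y') :
    1 / 8 * volume.real Db * (1 - exp (-γ * (y' - R / 2))) ≤ gasMass d Db xh R y' γ := by
  have : Nontrivial (EuclideanSpace ℝ (Fin (d - 1))) :=
    Module.nontrivial_of_finrank_pos (R := ℝ) (by rw [finrank_euclideanSpace_fin]; omega)
  have h8 := one_div_eight_le_one_sub_sqrt_three_div_two
  have hcut := measureReal_diff_ball_mul_ge volume (c := √3 / 2) (by positivity) (by linarith)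
    hDb hball
  have hdecay : 0 ≤ 1 - exp (-γ * (y' - R / 2)) := by
    rw [sub_nonneg, exp_le_one_iff]
    nlinarith
  calc 1 / 8 * volume.real Db * (1 - exp (-γ * (y' - R / 2)))
      ≤ (1 - √3 / 2) * volume.real Db * (1 - exp (-γ * (y' - R / 2))) := by
        gcongr
    _ ≤ volume.real (Db \ Metric.ball xh (√3 / 2 * R)) * (1 - exp (-γ * (y' - R / 2))) := by
        gcongr
    _ ≤ gasMass d Db xh R y' γ := by
        simpa only [integral_Ioo_mul_exp_neg_mul hγ (sub_nonneg.2 hy'), mul_zero, exp_zero]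
          using le_gasMass_of_prod_subset hDb hγ
            (diff_ball_prod_Ioo_subset_gasRegion (xh := xh) (y' := y') hR)

end Mass

lemma one_div_eight_le_exp_neg_two : 1 / 8 ≤ exp (-2) := by
  rw [exp_neg, one_div]
  gcongr
  calc exp 2 = exp 1 * exp 1 := by rw [← exp_add]; norm_num
    _ ≤ 8 := by nlinarith [exp_one_lt_d9, exp_pos 1]

/-- When `γ (y' - R/2) < 1/2`, already `e^{-γ (y' + R)} ≥ e⁻² ≥ 1/8`. -/
lemma one_div_eight_mul_one_sub_exp_neg_half_le_max {γ R y' : ℝ} (hγ : 0 ≤ γ) (hy' : R ≤ y') :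
    1 / 8 * (1 - exp (-(1 / 2))) ≤
      max (exp (-γ * (y' + R))) (1 / 8 * (1 - exp (-γ * (y' - R / 2)))) := by
  by_cases hlarge : 1 / 2 ≤ γ * (y' - R / 2)
  · refine le_max_of_le_right ?_
    gcongr
    linarith
  · refine le_max_of_le_left ?_
    have hR : γ * R ≤ γ * (2 * (y' - R / 2)) := by gcongr; linarith
    calc 1 / 8 * (1 - exp (-(1 / 2))) ≤ 1 / 8 := by linarith [exp_pos (-(1 / 2))]
      _ ≤ exp (-2) := one_div_eight_le_exp_neg_two
      _ ≤ exp (-γ * (y' + R)) := by gcongr; linarith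

theorem archimedes_mass_bounds_general (d : ℕ) (hd : 2 ≤ d)
    (Db : Set (EuclideanSpace ℝ (Fin (d - 1))))
    (hDbb : Bornology.IsBounded Db)
    (R : ℝ) (hR : 0 < R) (xh : EuclideanSpace ℝ (Fin (d - 1)))
    (hball : Metric.ball xh R ⊆ Db)
    (γ y' : ℝ) (hγ : 0 < γ) (hy' : R ≤ y') :
    1 / 8 * (1 - exp (-(1 / 2))) * (volume Db).toReal ≤ gasMass d Db xh R y' γ
      ∧ gasMass d Db xh R y' γ ≤ (volume Db).toReal := by
  have hDb : volume Db ≠ ⊤ := hDbb.measure_lt_top.ne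
  have hslab := measureReal_mul_exp_le_gasMass (xh := xh) hDb hγ hR.le (by linarith)
  have hcyl := measureReal_mul_one_sub_exp_le_gasMass hd hDb hball hγ hR.le (y' := y')
    (by linarith)
  have hV : 0 ≤ volume.real Db := measureReal_nonneg
  refine ⟨?_, gasMass_le hDb hγ⟩
  calc 1 / 8 * (1 - exp (-(1 / 2))) * volume.real Db
      ≤ max (exp (-γ * (y' + R))) (1 / 8 * (1 - exp (-γ * (y' - R / 2)))) * volume.real Db := by
        gcongr
        exact one_div_eight_mul_one_sub_exp_neg_half_le_max hγ.le hy'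
    _ ≤ gasMass d Db xh R y' γ := by
        rw [max_mul_of_nonneg _ _ hV, max_le_iff]
        constructor <;> linarith

/-- `(1/8)(1 − e^{-1/2})|D_b| ≤ Q(γ,y') ≤ |D_b|`. -/
theorem archimedes_mass_bounds (d : ℕ) (hd : 2 ≤ d)
    (Db : Set (EuclideanSpace ℝ (Fin (d - 1)))) (hDb : MeasurableSet Db)
    (hDbb : Bornology.IsBounded Db) (hDbpos : 0 < volume Db)
    (R : ℝ) (hR : 0 < R) (xh : EuclideanSpace ℝ (Fin (d - 1)))
    (hball : Metric.ball xh R ⊆ Db)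
    (γ y' : ℝ) (hγ : 0 < γ) (hy' : R ≤ y') :
    1 / 8 * (1 - exp (-(1 / 2))) * (volume Db).toReal ≤ gasMass d Db xh R y' γ
      ∧ gasMass d Db xh R y' γ ≤ (volume Db).toReal :=
  archimedes_mass_bounds_general d hd Db hDbb R hR xh hball γ y' hγ hy'
end

section
/- Let α: (0, z) → (0, ∞) be C¹ with α'(u) = α(u)β(u), where β is continuous, strictly positive on (0, u₀), strictly negative on (u₀, z), and satisfies |β(u)| ≥ (d/(2z²))|u − u₀| for all u. Then for k ≥ 1, ∫_0^z α(u)^k (z−u)^{d-1} du ≤ (2 + 4/d) z^d α(u₀)^k / √k, provided z k^{-1/2} ≤ min(u₀, z − u₀). -/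
open MeasureTheory Set

/-!
Since `β` changes sign from positive to negative at `u₀`, `α` is maximal there. Split `(0, z)` at
`u₀ ± z / √k`. On the middle piece the integrand is at most `α(u₀)^k z^(d-1)`. On the outer pieces
`|β| ≥ d / (2 z √k)`, so the integrand is at most `(2 z^d / (d √k)) |(α^k)'|`; as `α^k` is monotone
there with values in `(0, α(u₀)^k]`, each outer piece contributes at most `2 z^d α(u₀)^k / (d √k)`.
Nothing is known about `α` at `0` and `z`, so the fundamental theorem of calculus is applied on
compact subintervals and the bound passes to the limit by continuity of the primitive.
-/

theorem isMaxOn_of_hasDerivAt_nonneg_of_nonpos {f f' : ℝ → ℝ} {s t c : ℝ} (hc : c ∈ Ioo s t)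
    (hf : ∀ x ∈ Ioo s t, HasDerivAt f (f' x) x) (hf'_left : ∀ x ∈ Ioo s c, 0 ≤ f' x)
    (hf'_right : ∀ x ∈ Ioo c t, f' x ≤ 0) : IsMaxOn f (Ioo s t) c := by
  have hcont : ContinuousOn f (Ioo s t) := fun x hx ↦ (hf x hx).continuousAt.continuousWithinAt
  have hderiv (D : Set ℝ) (hD : D ⊆ Ioo s t) :
      ∀ x ∈ interior D, HasDerivWithinAt f (f' x) (interior D) x :=
    fun x hx ↦ (hf x (hD (interior_subset hx))).hasDerivWithinAt
  intro x hx
  rcases le_total x c with hxc | hcx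
  · have hsub : Ioc s c ⊆ Ioo s t := Ioc_subset_Ioo_right hc.2
    have hmono := monotoneOn_of_hasDerivWithinAt_nonneg (convex_Ioc s c) (hcont.mono hsub)
      (hderiv _ hsub) (by rwa [interior_Ioc])
    exact hmono ⟨hx.1, hxc⟩ ⟨hc.1, le_rfl⟩ hxc
  · have hsub : Ico c t ⊆ Ioo s t := Ico_subset_Ioo_left hc.1
    have hanti := antitoneOn_of_hasDerivWithinAt_nonpos (convex_Ico c t) (hcont.mono hsub)
      (hderiv _ hsub) (by rwa [interior_Ico])
    exact hanti ⟨le_rfl, hc.2⟩ ⟨hcx, hx.2⟩ hcx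

theorem ContinuousOn.le_of_forall_Ioo_le {g : ℝ → ℝ} {a b C : ℝ} (hab : a < b)
    (hg : ContinuousOn g (Icc a b)) (h : ∀ x ∈ Ioo a b, g x ≤ C) : ∀ x ∈ Icc a b, g x ≤ C :=
  fun x hx ↦ ((hg x hx).mono Ioo_subset_Icc_self).closure_le (by rwa [closure_Ioo hab.ne])
    continuousWithinAt_const h

theorem intervalIntegral_le_of_forall_Ioo_le {f : ℝ → ℝ} {s t C : ℝ} (hst : s ≤ t) (hC : 0 ≤ C)
    (hf : IntervalIntegrable f volume s t)
    (h : ∀ p ∈ Ioo s t, ∀ q ∈ Ioo s t, p ≤ q → ∫ x in p..q, f x ≤ C) :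
    ∫ x in s..t, f x ≤ C := by
  rcases hst.eq_or_lt with rfl | hst
  · simpa using hC
  have hfI : IntegrableOn f (Icc s t) := (intervalIntegrable_iff_integrableOn_Icc_of_le hst.le).1 hf
  have hleft : ∀ q ∈ Ioo s t, ∫ x in s..q, f x ≤ C := by
    intro q hq
    have hcont : ContinuousOn (fun p ↦ ∫ x in p..q, f x) (Icc s q) := by
      rw [← uIcc_of_le hq.1.le]
      refine intervalIntegral.continuousOn_primitive_interval_left (hfI.mono_set ?_)
      rw [uIcc_of_le hq.1.le]
      exact Icc_subset_Icc_right hq.2.le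
    exact hcont.le_of_forall_Ioo_le hq.1 (fun p hp ↦ h p ⟨hp.1, hp.2.trans hq.2⟩ q hq hp.2.le) s
      (left_mem_Icc.2 hq.1.le)
  have hcont : ContinuousOn (fun q ↦ ∫ x in s..q, f x) (Icc s t) := by
    rw [← uIcc_of_le hst.le]
    exact intervalIntegral.continuousOn_primitive_interval (by rwa [uIcc_of_le hst.le])
  exact hcont.le_of_forall_Ioo_le hst hleft t (right_mem_Icc.2 hst.le)

theorem intervalIntegral_le_sub_of_le_hasDerivAt {f g G : ℝ → ℝ} {s t m M : ℝ} (hst : s ≤ t)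
    (hmM : m ≤ M) (hf : IntervalIntegrable f volume s t)
    (hG : ∀ x ∈ Ioo s t, HasDerivAt G (g x) x) (hg : ContinuousOn g (Ioo s t))
    (hfg : ∀ x ∈ Ioo s t, f x ≤ g x) (hGmM : MapsTo G (Ioo s t) (Icc m M)) :
    ∫ x in s..t, f x ≤ M - m := by
  refine intervalIntegral_le_of_forall_Ioo_le hst (sub_nonneg.2 hmM) hf fun p hp q hq hpq ↦ ?_
  have hsub : uIcc p q ⊆ Ioo s t := uIcc_of_le hpq ▸ Icc_subset_Ioo hp.1 hq.2
  have hg_int : IntervalIntegrable g volume p q := (hg.mono hsub).intervalIntegrable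
  calc ∫ x in p..q, f x ≤ ∫ x in p..q, g x :=
        intervalIntegral.integral_mono_on_of_le_Ioo hpq
          (hf.mono_set (uIcc_subset_uIcc (Icc_subset_uIcc (Ioo_subset_Icc_self hp))
            (Icc_subset_uIcc (Ioo_subset_Icc_self hq))))
          hg_int fun x hx ↦ hfg x (hsub (Ioo_subset_Icc_self.trans Icc_subset_uIcc hx))
    _ = G q - G p :=
        intervalIntegral.integral_eq_sub_of_hasDerivAt (fun x hx ↦ hG x (hsub hx)) hg_int
    _ ≤ M - m := sub_le_sub (hGmM hq).2 (hGmM hp).1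

theorem intervalIntegral_le_sub_of_le_abs_hasDerivAt {f g G : ℝ → ℝ} {s t m M : ℝ} (hst : s ≤ t)
    (hmM : m ≤ M) (hf : IntervalIntegrable f volume s t)
    (hG : ∀ x ∈ Ioo s t, HasDerivAt G (g x) x) (hg : ContinuousOn g (Ioo s t))
    (hg_sign : (∀ x ∈ Ioo s t, 0 ≤ g x) ∨ ∀ x ∈ Ioo s t, g x ≤ 0)
    (hfg : ∀ x ∈ Ioo s t, f x ≤ |g x|) (hGmM : MapsTo G (Ioo s t) (Icc m M)) :
    ∫ x in s..t, f x ≤ M - m := by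
  rcases hg_sign with hg_nonneg | hg_nonpos
  · exact intervalIntegral_le_sub_of_le_hasDerivAt hst hmM hf hG hg
      (fun x hx ↦ (hfg x hx).trans_eq (abs_of_nonneg (hg_nonneg x hx))) hGmM
  · have := intervalIntegral_le_sub_of_le_hasDerivAt (G := -G) (m := -M) (M := -m) hst
      (neg_le_neg hmM) hf (fun x hx ↦ (hG x hx).neg) hg.neg
      (fun x hx ↦ (hfg x hx).trans_eq (abs_of_nonpos (hg_nonpos x hx)))
      fun x hx ↦ ⟨neg_le_neg (hGmM hx).2, neg_le_neg (hGmM hx).1⟩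
    linarith

theorem hasDerivAt_pow_of_hasDerivAt_mul {α β : ℝ → ℝ} {x : ℝ} (n : ℕ)
    (h : HasDerivAt α (α x * β x) x) : HasDerivAt (fun y ↦ α y ^ n) (n * α x ^ n * β x) x := by
  refine (h.pow n).congr_deriv ?_
  rcases n with _ | n
  · simp
  · simp only [Nat.add_sub_cancel, pow_succ]; push_cast; ring

theorem pow_pred_le_mul_of_div_sqrt_le {d k : ℕ} {z y δ b : ℝ} (hd : 1 ≤ d) (hk : 1 ≤ k)
    (hz : 0 < z) (hy : y ∈ Icc 0 z) (hδ : z / √k ≤ δ) (hb : d / (2 * z ^ 2) * δ ≤ b) :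
    y ^ (d - 1) ≤ 2 * z ^ d / (d * √k) * (k * b) := by
  have hk0 : (0 : ℝ) < k := by exact_mod_cast hk
  have hd0 : (0 : ℝ) < d := by exact_mod_cast hd
  calc y ^ (d - 1) ≤ z ^ (d - 1) := pow_le_pow_left₀ hy.1 hy.2 _
    _ = 2 * z ^ d / (d * √k) * (k * (d / (2 * z ^ 2) * (z / √k))) := by
        rw [← pow_sub_one_mul (show d ≠ 0 by omega) z]
        field_simp
        rw [Real.sq_sqrt hk0.le]
    _ ≤ 2 * z ^ d / (d * √k) * (k * b) := by
        gcongr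
        exact (by gcongr : _ ≤ d / (2 * z ^ 2) * δ).trans hb

theorem ContinuousOn.intervalIntegrable_of_norm_le {f : ℝ → ℝ} {a b C : ℝ} (hab : a ≤ b)
    (hf : ContinuousOn f (Ioo a b)) (hC : ∀ x ∈ Ioo a b, ‖f x‖ ≤ C) :
    IntervalIntegrable f volume a b :=
  (intervalIntegrable_iff_integrableOn_Ioo_of_le hab).2 <|
    .of_bound measure_Ioo_lt_top (hf.aestronglyMeasurable measurableSet_Ioo) C
      (ae_restrict_of_forall_mem measurableSet_Ioo hC)

theorem intervalIntegral.integral_add_adjacent_intervals₃ {f : ℝ → ℝ} {s a b t : ℝ} (hsa : s ≤ a)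
    (hab : a ≤ b) (hbt : b ≤ t) (hf : IntervalIntegrable f volume s t) :
    ∫ x in s..t, f x = (∫ x in s..a, f x) + (∫ x in a..b, f x) + ∫ x in b..t, f x := by
  have hsub {p q : ℝ} (hp : p ∈ Icc s t) (hq : q ∈ Icc s t) : IntervalIntegrable f volume p q :=
    hf.mono_set (uIcc_subset_uIcc (Icc_subset_uIcc hp) (Icc_subset_uIcc hq))
  have hst : s ≤ t := hsa.trans (hab.trans hbt)
  have hs : s ∈ Icc s t := left_mem_Icc.2 hst
  have ht : t ∈ Icc s t := right_mem_Icc.2 hst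
  have ha : a ∈ Icc s t := ⟨hsa, hab.trans hbt⟩
  have hb : b ∈ Icc s t := ⟨hsa.trans hab, hbt⟩
  rw [integral_add_adjacent_intervals (hsub hs ha) (hsub ha hb),
    integral_add_adjacent_intervals (hsub hs hb) (hsub hb ht)]

section Laplace

variable {d k : ℕ} {z u₀ : ℝ} {α β : ℝ → ℝ}

theorem laplace_integrand_le (hαpos : ∀ u ∈ Ioo 0 z, 0 < α u) (hmax : IsMaxOn α (Ioo 0 z) u₀)
    {u : ℝ} (hu : u ∈ Ioo 0 z) : α u ^ k * (z - u) ^ (d - 1) ≤ α u₀ ^ k * z ^ (d - 1) := by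
  have hα := (hαpos u hu).le
  exact mul_le_mul (pow_le_pow_left₀ hα (hmax hu) k)
    (pow_le_pow_left₀ (sub_nonneg.2 hu.2.le) (sub_le_self z hu.1.le) _)
    (pow_nonneg (sub_nonneg.2 hu.2.le) _) (pow_nonneg (hα.trans (hmax hu)) k)

theorem laplace_intervalIntegrable (hαpos : ∀ u ∈ Ioo 0 z, 0 < α u)
    (hmax : IsMaxOn α (Ioo 0 z) u₀) (hαc : ContinuousOn α (Ioo 0 z)) {s t : ℝ} (hs : 0 ≤ s)
    (hst : s ≤ t) (ht : t ≤ z) :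
    IntervalIntegrable (fun u ↦ α u ^ k * (z - u) ^ (d - 1)) volume s t := by
  have hsub : Ioo s t ⊆ Ioo 0 z := Ioo_subset_Ioo hs ht
  refine ContinuousOn.intervalIntegrable_of_norm_le (C := α u₀ ^ k * z ^ (d - 1)) hst
    (((hαc.mono hsub).pow k).mul (by fun_prop)) fun u hu ↦ ?_
  have hu' := hsub hu
  rw [Real.norm_of_nonneg (mul_nonneg (pow_nonneg (hαpos u hu').le k)
    (pow_nonneg (sub_nonneg.2 hu'.2.le) _))]
  exact laplace_integrand_le hαpos hmax hu'

theorem laplace_integral_le_length_mul (hαpos : ∀ u ∈ Ioo 0 z, 0 < α u)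
    (hmax : IsMaxOn α (Ioo 0 z) u₀) (hαc : ContinuousOn α (Ioo 0 z)) {s t : ℝ} (hs : 0 ≤ s)
    (hst : s ≤ t) (ht : t ≤ z) :
    ∫ u in s..t, α u ^ k * (z - u) ^ (d - 1) ≤ (t - s) * (α u₀ ^ k * z ^ (d - 1)) := by
  calc ∫ u in s..t, α u ^ k * (z - u) ^ (d - 1) ≤ ∫ _ in s..t, α u₀ ^ k * z ^ (d - 1) :=
        intervalIntegral.integral_mono_on_of_le_Ioo hst
          (laplace_intervalIntegrable hαpos hmax hαc hs hst ht) intervalIntegrable_const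
          fun u hu ↦ laplace_integrand_le hαpos hmax (Ioo_subset_Ioo hs ht hu)
    _ = (t - s) * (α u₀ ^ k * z ^ (d - 1)) := by
        rw [intervalIntegral.integral_const, smul_eq_mul]

theorem laplace_tail_le (hd : 1 ≤ d) (hk : 1 ≤ k) (hu₀ : u₀ ∈ Ioo 0 z)
    (hαpos : ∀ u ∈ Ioo 0 z, 0 < α u) (hmax : IsMaxOn α (Ioo 0 z) u₀)
    (hαβ : ∀ u ∈ Ioo 0 z, HasDerivAt α (α u * β u) u) (hβcont : ContinuousOn β (Ioo 0 z))
    (hβlb : ∀ u ∈ Ioo 0 z, (d : ℝ) / (2 * z ^ 2) * |u - u₀| ≤ |β u|) {s t : ℝ} (hs : 0 ≤ s)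
    (hst : s ≤ t) (ht : t ≤ z) (hβ_sign : (∀ u ∈ Ioo s t, 0 ≤ β u) ∨ ∀ u ∈ Ioo s t, β u ≤ 0)
    (hfar : ∀ u ∈ Ioo s t, z / √k ≤ |u - u₀|) :
    ∫ u in s..t, α u ^ k * (z - u) ^ (d - 1) ≤ 2 * z ^ d / (d * √k) * α u₀ ^ k := by
  set c := 2 * z ^ d / (d * √k)
  have hz : 0 < z := hu₀.1.trans hu₀.2
  have hc : 0 ≤ c := by positivity
  have hsub : Ioo s t ⊆ Ioo 0 z := Ioo_subset_Ioo hs ht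
  have hαc : ContinuousOn α (Ioo 0 z) := fun u hu ↦ (hαβ u hu).continuousAt.continuousWithinAt
  have hcoef (u : ℝ) (hu : u ∈ Ioo s t) : 0 ≤ c * k * α u ^ k :=
    mul_nonneg (mul_nonneg hc k.cast_nonneg) (pow_nonneg (hαpos u (hsub hu)).le k)
  have hbound (u : ℝ) (hu : u ∈ Ioo s t) :
      α u ^ k * (z - u) ^ (d - 1) ≤ |c * (k * α u ^ k * β u)| := by
    have hu' := hsub hu
    simp only [← mul_assoc]
    rw [abs_mul, abs_of_nonneg (hcoef u hu)]
    calc α u ^ k * (z - u) ^ (d - 1) ≤ α u ^ k * (c * (k * |β u|)) :=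
          mul_le_mul_of_nonneg_left (pow_pred_le_mul_of_div_sqrt_le hd hk hz
            ⟨by linarith [hu'.2], by linarith [hu'.1]⟩ (hfar u hu) (hβlb u hu'))
            (pow_nonneg (hαpos u hu').le k)
      _ = c * k * α u ^ k * |β u| := by ring
  have hderiv (u : ℝ) (hu : u ∈ Ioo s t) :
      HasDerivAt (fun x ↦ c * α x ^ k) (c * (k * α u ^ k * β u)) u :=
    (hasDerivAt_pow_of_hasDerivAt_mul k (hαβ u (hsub hu))).const_mul c
  have hsign : (∀ u ∈ Ioo s t, 0 ≤ c * (k * α u ^ k * β u)) ∨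
      ∀ u ∈ Ioo s t, c * (k * α u ^ k * β u) ≤ 0 := by
    simp only [← mul_assoc]
    exact hβ_sign.imp (fun h u hu ↦ mul_nonneg (hcoef u hu) (h u hu))
      fun h u hu ↦ mul_nonpos_of_nonneg_of_nonpos (hcoef u hu) (h u hu)
  have hrange : MapsTo (fun x ↦ c * α x ^ k) (Ioo s t) (Icc 0 (c * α u₀ ^ k)) := fun u hu ↦
    ⟨mul_nonneg hc (pow_nonneg (hαpos u (hsub hu)).le k),
      mul_le_mul_of_nonneg_left (pow_le_pow_left₀ (hαpos u (hsub hu)).le (hmax (hsub hu)) k) hc⟩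
  simpa using intervalIntegral_le_sub_of_le_abs_hasDerivAt hst
    (mul_nonneg hc (pow_nonneg (hαpos u₀ hu₀).le k))
    (laplace_intervalIntegrable hαpos hmax hαc hs hst ht) hderiv
    ((continuousOn_const.mul ((continuousOn_const.mul (hαc.pow k)).mul hβcont)).mono hsub)
    hsign hbound hrange

end Laplace

theorem archimedes_laplace_upper_general (d k : ℕ) (hd : 1 ≤ d) (hk : 1 ≤ k)
    (z u₀ : ℝ) (hu₀ : u₀ ∈ Ioo 0 z) (α β : ℝ → ℝ)
    (hαpos : ∀ u ∈ Ioo 0 z, 0 < α u)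
    (hαβ : ∀ u ∈ Ioo 0 z, HasDerivAt α (α u * β u) u)
    (hβcont : ContinuousOn β (Ioo 0 z))
    (hβlb : ∀ u ∈ Ioo 0 z, (d : ℝ) / (2 * z ^ 2) * |u - u₀| ≤ |β u|)
    (hβpos : ∀ u ∈ Ioo 0 u₀, 0 < β u)
    (hβneg : ∀ u ∈ Ioo u₀ z, β u < 0)
    (hkz : z / Real.sqrt k ≤ min u₀ (z - u₀)) :
    (∫ u in Ioo 0 z, α u ^ k * (z - u) ^ (d - 1))
      ≤ (2 + 4 / d) * z ^ d * α u₀ ^ k / Real.sqrt k := by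
  have hz : 0 < z := hu₀.1.trans hu₀.2
  have hαc : ContinuousOn α (Ioo 0 z) := fun u hu ↦ (hαβ u hu).continuousAt.continuousWithinAt
  have hmax : IsMaxOn α (Ioo 0 z) u₀ := isMaxOn_of_hasDerivAt_nonneg_of_nonpos hu₀ hαβ
    (fun u hu ↦ (mul_pos (hαpos u ⟨hu.1, hu.2.trans hu₀.2⟩) (hβpos u hu)).le)
    (fun u hu ↦ (mul_neg_of_pos_of_neg (hαpos u ⟨hu₀.1.trans hu.1, hu.2⟩) (hβneg u hu)).le)
  set ε := z / √k with hε
  have ha : 0 ≤ u₀ - ε := sub_nonneg.2 (hkz.trans (min_le_left _ _))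
  have hb : u₀ + ε ≤ z := by linarith [hkz.trans (min_le_right _ _)]
  have hab : u₀ - ε ≤ u₀ + ε := by linarith [show 0 ≤ ε by positivity]
  rw [← integral_Ioc_eq_integral_Ioo, ← intervalIntegral.integral_of_le hz.le,
    intervalIntegral.integral_add_adjacent_intervals₃ ha hab hb
      (laplace_intervalIntegrable hαpos hmax hαc le_rfl hz.le le_rfl)]
  have hleft := laplace_tail_le hd hk hu₀ hαpos hmax hαβ hβcont hβlb le_rfl ha (by linarith)
    (Or.inl fun u hu ↦ (hβpos u ⟨hu.1, by linarith [hu.2]⟩).le)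
    fun u hu ↦ le_abs.2 (Or.inr (by linarith [hu.2]))
  have hright := laplace_tail_le hd hk hu₀ hαpos hmax hαβ hβcont hβlb (by linarith) hb le_rfl
    (Or.inr fun u hu ↦ (hβneg u ⟨by linarith [hu.1], hu.2⟩).le)
    fun u hu ↦ le_abs.2 (Or.inl (by linarith [hu.1]))
  have hmid := laplace_integral_le_length_mul (k := k) (d := d) hαpos hmax hαc ha hab (by linarith)
  have hsum : 2 * z ^ d / (d * √k) * α u₀ ^ k + (u₀ + ε - (u₀ - ε)) * (α u₀ ^ k * z ^ (d - 1))
      + 2 * z ^ d / (d * √k) * α u₀ ^ k = (2 + 4 / d) * z ^ d * α u₀ ^ k / √k := by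
    have hd0 : (d : ℝ) ≠ 0 := by exact_mod_cast (by omega : d ≠ 0)
    rw [hε, ← pow_sub_one_mul (show d ≠ 0 by omega) z]
    field_simp
    ring
  linarith

/-- Laplace-type upper bound: if `α' = αβ` with `β` positive before `u₀`,
negative after, and `|β(u)| ≥ (d/(2z²))|u−u₀|`, then for `k ≥ 1` with
`z/√k ≤ min(u₀, z−u₀)`,
`∫₀^z α^k (z−u)^{d-1} du ≤ (2 + 4/d) z^d α(u₀)^k / √k`. -/
theorem archimedes_laplace_upper (d k : ℕ) (hd : 1 ≤ d) (hk : 1 ≤ k)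
    (z u₀ : ℝ) (hz : 0 < z) (hu₀ : u₀ ∈ Ioo 0 z) (α β : ℝ → ℝ)
    (hαpos : ∀ u ∈ Ioo 0 z, 0 < α u)
    (hαβ : ∀ u ∈ Ioo 0 z, HasDerivAt α (α u * β u) u)
    (hβcont : ContinuousOn β (Ioo 0 z))
    (hβlb : ∀ u ∈ Ioo 0 z, (d : ℝ) / (2 * z ^ 2) * |u - u₀| ≤ |β u|)
    (hβpos : ∀ u ∈ Ioo 0 u₀, 0 < β u)
    (hβneg : ∀ u ∈ Ioo u₀ z, β u < 0)
    (hkz : z / Real.sqrt k ≤ min u₀ (z - u₀)) :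
    (∫ u in Ioo 0 z, α u ^ k * (z - u) ^ (d - 1))
      ≤ (2 + 4 / d) * z ^ d * α u₀ ^ k / Real.sqrt k :=
  archimedes_laplace_upper_general d k hd hk z u₀ hu₀ α β hαpos hαβ hβcont hβlb hβpos hβneg hkz
end
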